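/- arXiv:1501.00079 — 2 statements merged into one kernel-verified Lean document; each statement's English description precedes it below -/
import Mathlib

section
/- Let G be a connected simple graph with n > 3 vertices and m edges. If the diameter of G is at least 3, then mc(G) = m − n + 2. -/
/-!
The lower bound colors a spanning tree with a single color and every other edge with a color of
its own. For the upper bound, fix `x`, `y` at distance at least three and charge every other
vertex `v` to the color of a monochromatic path from `v` to `y` if `v` is a neighbour of `x`, and
to `x` otherwise. The vertices charged to a color `k` reach `x` or `y` inside the color class of
`k`; if `x` and `y` lie in one component of that class, or if one of them has a neighbour of
color `k` (such a neighbour is never charged to `k`), the class has more edges than charged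
vertices. Summing over the colors gives `m ≥ (n - 2) + #colors`.
-/

open SimpleGraph Filter Real

/-- An edge-coloring `c` (colors on vertex pairs, only the values on edges matter)
of `G` is a monochromatic connection coloring (MC-coloring) if every two vertices
are joined by a path all of whose edges receive the same color. -/
def IsMCColoring {V : Type*} (G : SimpleGraph V) (c : Sym2 V → ℕ) : Prop :=
  ∀ u v : V, ∃ p : G.Walk u v, p.IsPath ∧ ∃ k : ℕ, ∀ e ∈ p.edges, c e = k

/-- `mcNum G` is the maximum number of colors (counted on the edges of `G`)
used in an MC-coloring of `G`; it is `0` if `G` admits no MC-coloring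
(in particular if `G` is disconnected). -/
noncomputable def mcNum {V : Type*} (G : SimpleGraph V) : ℕ :=
  sSup {k | ∃ c : Sym2 V → ℕ, IsMCColoring G c ∧ (Set.image c G.edgeSet).ncard = k}

namespace SimpleGraph

variable {V α : Type*} {G : SimpleGraph V}

variable (G) in
def colorClass (c : Sym2 V → α) (k : α) : SimpleGraph V :=
  fromEdgeSet {e ∈ G.edgeSet | c e = k}

theorem edgeSet_colorClass (c : Sym2 V → α) (k : α) :
    (G.colorClass c k).edgeSet = {e ∈ G.edgeSet | c e = k} := by
  rw [colorClass, edgeSet_fromEdgeSet, sdiff_eq_left]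
  exact Set.disjoint_left.2 fun e he => G.not_isDiag_of_mem_edgeSet he.1

@[simp]
theorem colorClass_adj {c : Sym2 V → α} {k : α} {u v : V} :
    (G.colorClass c k).Adj u v ↔ G.Adj u v ∧ c s(u, v) = k := by
  rw [← mem_edgeSet, edgeSet_colorClass]
  rfl

theorem Reachable.exists_adj_of_ne {u v : V} (h : G.Reachable u v) (huv : u ≠ v) :
    ∃ w, G.Adj u w := by
  obtain ⟨p⟩ := h
  exact ⟨_, p.adj_snd (Walk.not_nil_of_ne huv)⟩

theorem ncard_le_ncard_edgeSet_add_ncard [Finite V] (H : SimpleGraph V) {U R : Set V}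
    (hUR : ∀ u ∈ U, ∃ r ∈ R, H.Reachable u r) : U.ncard ≤ H.edgeSet.ncard + R.ncard := by
  obtain rfl | ⟨r₀, hr₀⟩ := R.eq_empty_or_nonempty
  · have hU : U = ∅ := Set.eq_empty_of_forall_notMem fun u hu => by simpa using hUR u hu
    simp [hU]
  -- Joining `r₀` to the other roots and to all vertices outside `U` makes the graph connected.
  set S := (R \ {r₀}) ∪ Uᶜ
  set K := fromEdgeSet ((s(r₀, ·)) '' S)
  have hK : K.edgeSet.ncard ≤ S.ncard :=
    (Set.ncard_le_ncard (edgeSet_fromEdgeSet _ ▸ Set.sdiff_subset)).trans Set.ncard_image_le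
  have hS : S.ncard ≤ R.ncard - 1 + (Nat.card V - U.ncard) := by
    have h1 := Set.ncard_sdiff_singleton_add_one hr₀
    have h2 := Set.ncard_add_ncard_compl U
    have : S.ncard ≤ (R \ {r₀}).ncard + Uᶜ.ncard := Set.ncard_union_le _ _
    omega
  have hroot : ∀ v ∈ S, (H ⊔ K).Reachable v r₀ := fun v hv => by
    by_cases hv₀ : v = r₀
    · rw [hv₀]
    · exact Adj.reachable <| Or.inr <| (fromEdgeSet_adj _).2 ⟨⟨v, hv, Sym2.eq_swap⟩, hv₀⟩
  have hconn : (H ⊔ K).Connected := by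
    have : Nonempty V := ⟨r₀⟩
    suffices h : ∀ v, (H ⊔ K).Reachable v r₀ from
      Connected.mk fun u v => (h u).trans (h v).symm
    intro v
    by_cases hv : v ∈ U
    · obtain ⟨r, hr, hvr⟩ := hUR v hv
      refine (hvr.mono le_sup_left).trans ?_
      by_cases hr' : r = r₀
      · rw [hr']
      · exact hroot r (Or.inl ⟨hr, hr'⟩)
    · exact hroot v (Or.inr hv)
  have hV := hconn.card_vert_le_card_edgeSet_add_one
  rw [Nat.card_coe_set_eq, edgeSet_sup] at hV
  have := Set.ncard_union_le H.edgeSet K.edgeSet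
  have := (Set.ncard_pos).2 ⟨r₀, hr₀⟩
  have := Set.ncard_le_card U
  omega

theorem ne_of_three_le_dist {x y : V} (hxy : 3 ≤ G.dist x y) : x ≠ y :=
  (dist_ne_zero_iff_ne_and_reachable.1 (show G.dist x y ≠ 0 by omega)).1

theorem not_adj_of_adj_of_three_le_dist {x y a : V} (hxy : 3 ≤ G.dist x y) (hxa : G.Adj x a) :
    ¬G.Adj a y := fun hay => by
  have := G.dist_le (.cons hxa (.cons hay .nil))
  simp only [Walk.length_cons, Walk.length_nil] at this
  omega

end SimpleGraph

namespace IsMCColoring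

variable {V : Type*} {G : SimpleGraph V} {c : Sym2 V → ℕ}

theorem exists_reachable_colorClass (hc : IsMCColoring G c) (u v : V) :
    ∃ k, (G.colorClass c k).Reachable u v := by
  obtain ⟨p, -, k, hk⟩ := hc u v
  refine ⟨k, ⟨p.transfer _ fun e he => ?_⟩⟩
  rw [edgeSet_colorClass]
  exact ⟨p.edges_subset_edgeSet he, hk e he⟩

end IsMCColoring

section LowerBound

variable {V : Type*} {G : SimpleGraph V}

theorem exists_isMCColoring_ncard_image_eq_ncard_sdiff_add_one [Finite V] {T : SimpleGraph V}
    (hTG : T ≤ G) (hT : T.Connected) (hTe : T.edgeSet.Nonempty) :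
    ∃ c, IsMCColoring G c ∧ (c '' G.edgeSet).ncard = (G.edgeSet \ T.edgeSet).ncard + 1 := by
  classical
  obtain ⟨f, hf⟩ := Countable.exists_injective_nat (Sym2 V)
  set c : Sym2 V → ℕ := fun e => if e ∈ T.edgeSet then 0 else f e + 1
  refine ⟨c, fun u v => ?_, ?_⟩
  · obtain ⟨p, hp⟩ := (hT.preconnected u v).exists_isPath
    refine ⟨p.mapLe hTG, hp.mapLe hTG, 0, fun e he => ?_⟩
    rw [Walk.edges_mapLe_eq_edges] at he
    simp [c, p.edges_subset_edgeSet he]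
  · have himage : c '' G.edgeSet = {0} ∪ (f · + 1) '' (G.edgeSet \ T.edgeSet) := by
      conv_lhs => rw [← Set.union_sdiff_cancel (edgeSet_mono hTG)]
      rw [Set.image_union,
        Set.image_congr (fun e he => if_pos he), hTe.image_const,
        Set.image_congr (fun e he => if_neg (Set.notMem_of_mem_sdiff he))]
    rw [himage, Set.ncard_union_eq (by simp), Set.ncard_singleton,
      Set.ncard_image_of_injective _ (f := (f · + 1)) ((add_left_injective 1).comp hf), add_comm]

theorem SimpleGraph.Connected.exists_isMCColoring_ncard_image_add_card_eq [Finite V]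
    [Nontrivial V] (hG : G.Connected) :
    ∃ c, IsMCColoring G c ∧ (c '' G.edgeSet).ncard + Nat.card V = G.edgeSet.ncard + 2 := by
  obtain ⟨T, hTG, hT⟩ := hG.exists_isTree_le
  obtain ⟨u, v, huv⟩ := exists_pair_ne V
  obtain ⟨w, huw⟩ := (hT.connected.preconnected u v).exists_adj_of_ne huv
  obtain ⟨c, hc, hcard⟩ :=
    exists_isMCColoring_ncard_image_eq_ncard_sdiff_add_one hTG hT.connected ⟨s(u, w), huw⟩
  refine ⟨c, hc, ?_⟩
  have hTcard := (isTree_iff_connected_and_card.1 hT).2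
  rw [Nat.card_coe_set_eq] at hTcard
  have := Set.ncard_sdiff_add_ncard_of_subset (edgeSet_mono hTG)
  omega

end LowerBound

section UpperBound

open Finset SimpleGraph

variable {V : Type*} {G : SimpleGraph V} {c : Sym2 V → ℕ} {x y : V}

theorem SimpleGraph.ncard_fiber_add_one_le_ncard_edgeSet_colorClass [Finite V]
    [DecidableRel G.Adj] {κ : V → ℕ} (hxy : 3 ≤ G.dist x y)
    (hκ : ∀ v, (G.colorClass c (κ v)).Reachable v (if G.Adj x v then y else x)) {k : ℕ}
    (hk : (G.colorClass c k).edgeSet.Nonempty) :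
    {v | v ≠ x ∧ v ≠ y ∧ κ v = k}.ncard + 1 ≤ (G.colorClass c k).edgeSet.ncard := by
  set H := G.colorClass c k
  set S := {v | v ≠ x ∧ v ≠ y ∧ κ v = k}
  have hne := ne_of_three_le_dist hxy
  have hxS : x ∉ S := fun h => h.1 rfl
  have hyS : y ∉ S := fun h => h.2.1 rfl
  have hSreach : ∀ v ∈ S, H.Reachable v x ∨ H.Reachable v y := by
    rintro v ⟨-, -, rfl⟩
    have := hκ v
    split_ifs at this
    exacts [.inr this, .inl this]
  by_cases hR : H.Reachable x y
  · have hU := H.ncard_le_ncard_edgeSet_add_ncard (U := insert x (insert y S)) (R := {x}) <| by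
      rintro v (rfl | rfl | hv)
      · exact ⟨v, rfl, .rfl⟩
      · exact ⟨x, rfl, hR.symm⟩
      · exact ⟨x, rfl, (hSreach v hv).elim id (·.trans hR.symm)⟩
    rw [Set.ncard_insert_of_notMem (by simp [hne, hxS]), Set.ncard_insert_of_notMem hyS,
      Set.ncard_singleton] at hU
    omega
  by_cases hN : ∃ a, H.Adj x a ∨ H.Adj y a
  · obtain ⟨a, ha⟩ := hN
    -- `a` is not charged to `k`, as its monochromatic path would join `x` to `y`.
    have haS : a ∉ S := by
      rintro ⟨-, -, hka⟩
      have hκa := hκ a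
      rw [hka] at hκa
      rcases ha with hxa | hya
      · rw [if_pos (colorClass_adj.1 hxa).1] at hκa
        exact hR (hxa.reachable.trans hκa)
      · have hxa : ¬G.Adj x a := fun hxa =>
          not_adj_of_adj_of_three_le_dist hxy hxa (colorClass_adj.1 hya).1.symm
        rw [if_neg hxa] at hκa
        exact hR (hya.reachable.trans hκa).symm
    have hax : a ≠ x := by
      rintro rfl
      exact ha.elim (·.ne rfl) fun hyx => hR hyx.reachable.symm
    have hay : a ≠ y := by
      rintro rfl
      exact ha.elim (fun hxy' => hR hxy'.reachable) (·.ne rfl)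
    have hU := H.ncard_le_ncard_edgeSet_add_ncard (U := insert a (insert x (insert y S)))
      (R := {x, y}) <| by
      rintro v (rfl | rfl | rfl | hv)
      · exact ha.elim (fun h => ⟨x, .inl rfl, h.reachable.symm⟩)
          fun h => ⟨y, .inr rfl, h.reachable.symm⟩
      · exact ⟨v, .inl rfl, .rfl⟩
      · exact ⟨v, .inr rfl, .rfl⟩
      · exact (hSreach v hv).elim (⟨x, .inl rfl, ·⟩) (⟨y, .inr rfl, ·⟩)
    rw [Set.ncard_insert_of_notMem (by simp [hax, hay, haS]),
      Set.ncard_insert_of_notMem (by simp [hne, hxS]), Set.ncard_insert_of_notMem hyS,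
      Set.ncard_pair hne] at hU
    omega
  · have hS : S = ∅ := Set.eq_empty_of_forall_notMem fun v hv => hN <| by
      rcases hSreach v hv with h | h
      · exact (h.symm.exists_adj_of_ne hv.1.symm).imp fun _ => .inl
      · exact (h.symm.exists_adj_of_ne hv.2.1.symm).imp fun _ => .inr
    rw [hS, Set.ncard_empty]
    exact (Set.ncard_pos).2 hk

theorem IsMCColoring.ncard_image_add_card_le [Finite V] (hc : IsMCColoring G c)
    (hxy : 3 ≤ G.dist x y) : (c '' G.edgeSet).ncard + Nat.card V ≤ G.edgeSet.ncard + 2 := by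
  classical
  have := Fintype.ofFinite V
  choose κ hκ using fun v => hc.exists_reachable_colorClass v (if G.Adj x v then y else x)
  set C := G.edgeFinset.image c
  set W : Finset V := (univ.erase x).erase y
  have hW : #W + 2 = Nat.card V := by
    rw [Nat.card_eq_fintype_card, ← card_univ, ← card_erase_add_one (mem_univ x),
      ← card_erase_add_one (mem_erase.2 ⟨(ne_of_three_le_dist hxy).symm, mem_univ y⟩)]
  have hκC : Set.MapsTo κ W C := fun v hv => by
    obtain ⟨hvx, hvy⟩ : v ≠ x ∧ v ≠ y := by simpa [W] using hv
    obtain ⟨w, hw⟩ := (hκ v).exists_adj_of_ne (by split_ifs <;> assumption)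
    obtain ⟨hvw, hcvw⟩ := colorClass_adj.1 hw
    exact mem_image.2 ⟨s(v, w), mem_edgeFinset.2 hvw, hcvw⟩
  have hfiber : ∀ k ∈ C, #(W.filter (κ · = k)) + 1 ≤ #(G.edgeFinset.filter (c · = k)) := by
    intro k hk
    obtain ⟨e, he, rfl⟩ := mem_image.1 hk
    have := ncard_fiber_add_one_le_ncard_edgeSet_colorClass hxy hκ ⟨e, by
      rw [edgeSet_colorClass]; exact ⟨mem_edgeFinset.1 he, rfl⟩⟩
    convert this using 2
    · rw [← Set.ncard_coe_finset]; congr; ext; simp [W, and_assoc, and_left_comm]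
    · rw [← Set.ncard_coe_finset, edgeSet_colorClass]; congr; ext; simp
  calc (c '' G.edgeSet).ncard + Nat.card V = #C + #W + 2 := by
        rw [← hW, ← coe_edgeFinset, ← coe_image, Set.ncard_coe_finset, add_assoc]
    _ = ∑ k ∈ C, (#(W.filter (κ · = k)) + 1) + 2 := by
        rw [sum_add_distrib, ← card_eq_sum_card_fiberwise hκC, sum_const, smul_eq_mul, mul_one,
          add_comm #C]
    _ ≤ ∑ k ∈ C, #(G.edgeFinset.filter (c · = k)) + 2 := by
        gcongr with k hk
        exact hfiber k hk
    _ = G.edgeSet.ncard + 2 := by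
        rw [← card_eq_sum_card_image, ← Set.ncard_coe_finset, coe_edgeFinset]

end UpperBound

theorem mc_eq_of_three_le_diam_general {V : Type*} [Fintype V]
    (G : SimpleGraph V) [DecidableRel G.Adj] (hG : G.Connected)
    (hd : 3 ≤ G.diam) :
    (mcNum G : ℤ) = (G.edgeFinset.card : ℤ) - (Fintype.card V : ℤ) + 2 := by
  have : Nontrivial V := nontrivial_of_diam_ne_zero (G := G) (by omega)
  obtain ⟨x, y, hxy⟩ := G.exists_dist_eq_diam
  obtain ⟨c₀, hc₀, hcard⟩ := hG.exists_isMCColoring_ncard_image_add_card_eq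
  have hmax : IsGreatest {k | ∃ c, IsMCColoring G c ∧ (c '' G.edgeSet).ncard = k}
      (c₀ '' G.edgeSet).ncard := by
    refine ⟨⟨c₀, hc₀, rfl⟩, ?_⟩
    rintro _ ⟨c, hc, rfl⟩
    have := hc.ncard_image_add_card_le (hxy ▸ hd)
    omega
  have hm : G.edgeSet.ncard = G.edgeFinset.card := by
    rw [← coe_edgeFinset, Set.ncard_coe_finset]
  rw [mcNum, hmax.csSup_eq]
  rw [Nat.card_eq_fintype_card, hm] at hcard
  omega

/-- If `G` is a connected graph with `n > 3` vertices and diameter at least 3,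
then `mc(G) = m - n + 2`. -/
theorem mc_eq_of_three_le_diam {V : Type*} [Fintype V] [DecidableEq V]
    (G : SimpleGraph V) [DecidableRel G.Adj] (hG : G.Connected)
    (hn : 3 < Fintype.card V) (hd : 3 ≤ G.diam) :
    (mcNum G : ℤ) = (G.edgeFinset.card : ℤ) - (Fintype.card V : ℤ) + 2 :=
  mc_eq_of_three_le_diam_general G hG hd
end

section
/- Let G be a connected simple graph with n vertices and m edges, and let r be a positive integer. If G is not r-connected, then mc(G) ≤ m − n + r. -/
/-!
Refining an MC-colouring by the components of its colour classes keeps it an MC-colouring, does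
not decrease the number of colours, and makes every colour class connected; so assume the classes
are connected. Let `S`, `|S| < r`, separate `a` from `b`, and give `b` potential `0`, the vertices
joined to `a` outside `S` potential `1`, and the other vertices outside `S` potential `2`. Every
vertex `w ∉ S`, `w ≠ b`, is joined by a monochromatic path, necessarily through `S`, to a vertex
of smaller potential; charge `w` to the colour of that path. A colour class on `U` with edge set
`E` contains a vertex of `S` and a vertex of least potential off `S`, neither charged, so it
carries at most `|U| - 2 ≤ |E| - 1` charges. Summing over the colours,
`(n - |S| - 1) + #colours ≤ m`.
-/

open SimpleGraph Filter Real

/-- A graph is `k`-connected if it has more than `k` vertices and deleting any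
set of fewer than `k` vertices leaves it connected. -/
def IsKConnected {V : Type*} [Fintype V] (G : SimpleGraph V) (k : ℕ) : Prop :=
  k < Fintype.card V ∧
    ∀ S : Finset V, S.card < k → (G.induce ((S : Set V)ᶜ)).Connected

open Finset

namespace SimpleGraph

variable {V α : Type*}

section Support

variable [Fintype V] [DecidableEq V] {H : SimpleGraph V} [DecidableRel H.Adj]

theorem card_support_le_card_edgeFinset_add_one
    (hH : ∀ x ∈ H.support, ∀ y ∈ H.support, H.Reachable x y) :
    #H.support.toFinset ≤ #H.edgeFinset + 1 := by
  rcases isEmpty_or_nonempty H.support with hempty | hne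
  · simp [Set.toFinset_eq_empty.mpr (Set.isEmpty_coe_sort.mp hempty)]
  have hconn : (H.induce H.support).Connected := by
    refine ⟨fun ⟨x, hx⟩ ⟨y, hy⟩ => ?_⟩
    obtain ⟨p⟩ := hH x hx y hy
    by_cases hxy : x = y
    · subst hxy; rfl
    exact ⟨p.induce _ fun z hz =>
      mem_support_of_mem_walk_support p (Walk.not_nil_of_ne hxy) hz⟩
  have := hconn.card_vert_le_card_edgeSet_add_one
  rwa [Nat.card_eq_card_toFinset, Nat.card_eq_fintype_card, ← edgeFinset_card,
    card_edgeFinset_induce_support] at this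

/-- `C` avoids a vertex of `S` in the support and a vertex of least potential off `S`, so
`#C + 2 ≤ #H.support.toFinset` when `C` is nonempty. -/
theorem card_add_one_le_card_edgeFinset_of_reachable
    (hH : ∀ x ∈ H.support, ∀ y ∈ H.support, H.Reachable x y) (hE : H.edgeFinset.Nonempty)
    {S C : Finset V} {D : V → ℕ}
    (hC : ∀ w ∈ C, w ∉ S ∧ (∃ p ∉ S, D p < D w ∧ H.Reachable w p) ∧
      ∃ s ∈ S, H.Reachable w s) :
    #C + 1 ≤ #H.edgeFinset := by
  obtain rfl | ⟨w, hw⟩ := C.eq_empty_or_nonempty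
  · simpa using hE.card_pos
  have mem_support {x y : V} (hxy : x ≠ y) (h : H.Reachable x y) : x ∈ H.support.toFinset ∧
      y ∈ H.support.toFinset := by
    simpa using ⟨mem_support_of_reachable hxy h, mem_support_of_reachable hxy.symm h.symm⟩
  obtain ⟨hwS, ⟨p, hpS, hpw, hwp⟩, s, hsS, hws⟩ := hC w hw
  set U := H.support.toFinset \ S
  obtain ⟨ρ, hρU, hρ⟩ := U.exists_min_image D
    ⟨p, mem_sdiff.mpr ⟨(mem_support (by rintro rfl; omega) hwp).2, hpS⟩⟩
  have hCU : C ⊆ U.erase ρ := by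
    intro v hv
    obtain ⟨hvS, ⟨q, hqS, hqv, hvq⟩, -⟩ := hC v hv
    have hq := mem_support (by rintro rfl; omega) hvq
    have := hρ q (mem_sdiff.mpr ⟨hq.2, hqS⟩)
    exact mem_erase.mpr ⟨by rintro rfl; omega, mem_sdiff.mpr ⟨hq.1, hvS⟩⟩
  have hUsupp : U ⊂ H.support.toFinset :=
    ssubset_of_subset_of_ne sdiff_subset fun h =>
      (mem_sdiff.mp (h ▸ (mem_support (by rintro rfl; exact hwS hsS) hws).2)).2 hsS
  have := (card_le_card hCU).trans_eq (card_erase_of_mem hρU)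
  have := card_lt_card hUsupp
  have := card_support_le_card_edgeFinset_add_one hH
  have := card_pos.mpr ⟨ρ, hρU⟩
  omega

end Support

def colorGraph (G : SimpleGraph V) (c : Sym2 V → α) (k : α) : SimpleGraph V :=
  G.deleteEdges {e | c e ≠ k}

variable {G : SimpleGraph V} {c : Sym2 V → α} {k : α}

@[simp]
theorem colorGraph_adj {x y : V} : (G.colorGraph c k).Adj x y ↔ G.Adj x y ∧ c s(x, y) = k := by
  simp [colorGraph]

@[simp]
theorem mem_edgeSet_colorGraph {e : Sym2 V} :
    e ∈ (G.colorGraph c k).edgeSet ↔ e ∈ G.edgeSet ∧ c e = k := by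
  simp [colorGraph, edgeSet_deleteEdges]

instance [DecidableRel G.Adj] [DecidableEq α] : DecidableRel (G.colorGraph c k).Adj :=
  fun _ _ => decidable_of_iff _ colorGraph_adj.symm

theorem colorGraph_le : G.colorGraph c k ≤ G := deleteEdges_le _

theorem edgeFinset_colorGraph [Fintype V] [DecidableEq V] [DecidableRel G.Adj] [DecidableEq α] :
    (G.colorGraph c k).edgeFinset = {e ∈ G.edgeFinset | c e = k} := by
  ext e; simp

/-- The second coordinate is the vertex set of the component of `e` in its colour class (the
union over both endpoints only makes the definition symmetric). -/
def componentColoring (G : SimpleGraph V) (c : Sym2 V → α) (e : Sym2 V) : α × Set V :=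
  (c e, {v | ∃ x ∈ e, (G.colorGraph c (c e)).Reachable x v})

theorem componentColoring_mk_of_adj {x y : V} (h : (G.colorGraph c k).Adj x y) :
    G.componentColoring c s(x, y) = (k, {v | (G.colorGraph c k).Reachable x v}) := by
  obtain ⟨-, rfl⟩ := colorGraph_adj.mp h
  ext v
  · rfl
  · simp only [componentColoring, Sym2.mem_iff, exists_eq_or_imp, exists_eq_left,
      Set.mem_ofPred_eq, or_iff_left_iff_imp]
    exact h.reachable.trans

theorem reachable_colorGraph_componentColoring {x y : V}
    (h : (G.colorGraph c k).Reachable x y) :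
    (G.colorGraph (G.componentColoring c)
      (k, {v | (G.colorGraph c k).Reachable x v})).Reachable x y := by
  obtain ⟨p⟩ := h
  suffices ∀ {u} (q : (G.colorGraph c k).Walk u y), (G.colorGraph c k).Reachable x u →
      (G.colorGraph (G.componentColoring c)
        (k, {v | (G.colorGraph c k).Reachable x v})).Reachable u y from this p .rfl
  intro u q
  clear p
  induction q with
  | nil => exact fun _ => .rfl
  | cons hadj q ih =>
    intro hxu
    refine Adj.reachable ?_ |>.trans (ih (hxu.trans hadj.reachable))
    rw [colorGraph_adj, componentColoring_mk_of_adj hadj]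
    exact ⟨(colorGraph_adj.mp hadj).1, by congr 2; ext v; exact ⟨hxu.trans, hxu.symm.trans⟩⟩

theorem eq_of_mem_support_colorGraph_componentColoring {κ : α × Set V} {x : V}
    (hx : x ∈ (G.colorGraph (G.componentColoring c) κ).support) :
    κ = (κ.1, {v | (G.colorGraph c κ.1).Reachable x v}) := by
  obtain ⟨y, hy⟩ := hx
  obtain ⟨hxy, rfl⟩ := colorGraph_adj.mp hy
  exact componentColoring_mk_of_adj (colorGraph_adj.mpr ⟨hxy, rfl⟩)

theorem reachable_of_mem_support_colorGraph_componentColoring {κ : α × Set V} {x y : V}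
    (hx : x ∈ (G.colorGraph (G.componentColoring c) κ).support)
    (hy : y ∈ (G.colorGraph (G.componentColoring c) κ).support) :
    (G.colorGraph (G.componentColoring c) κ).Reachable x y := by
  have hxκ := eq_of_mem_support_colorGraph_componentColoring hx
  have hyκ := eq_of_mem_support_colorGraph_componentColoring hy
  have hcomp : {v | (G.colorGraph c κ.1).Reachable x v} =
      {v | (G.colorGraph c κ.1).Reachable y v} :=
    congrArg Prod.snd (hxκ.symm.trans hyκ)
  have hxy : y ∈ {v | (G.colorGraph c κ.1).Reachable x v} := hcomp ▸ Reachable.rfl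
  rw [hxκ]
  exact reachable_colorGraph_componentColoring hxy

section Separation

def Separates (G : SimpleGraph V) (S : Set V) (a b : V) : Prop :=
  ∀ p : G.Walk a b, ∃ s ∈ p.support, s ∈ S

variable {S : Set V}

theorem exists_separates_of_not_connected_induce (hS : Sᶜ.Nonempty)
    (h : ¬ (G.induce Sᶜ).Connected) : ∃ a b, a ∉ S ∧ b ∉ S ∧ G.Separates S a b := by
  have : Nonempty ↥Sᶜ := hS.to_subtype
  obtain ⟨⟨a, ha⟩, ⟨b, hb⟩, hab⟩ : ∃ x y, ¬ (G.induce Sᶜ).Reachable x y := by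
    simpa [connected_iff, Preconnected, this] using h
  refine ⟨a, b, ha, hb, fun p => ?_⟩
  by_contra! hp
  exact hab ⟨p.induce Sᶜ hp⟩

/-- The potential is `0` at `b`, `1` on the vertices joined to `a` outside `S`, and `2`
elsewhere. -/
theorem Separates.exists_potential {a b : V} (hab : G.Separates S a b) (ha : a ∉ S)
    (hb : b ∉ S) :
    ∃ D : V → ℕ, ∀ w ∉ S, w ≠ b → ∃ t ∉ S, D t < D w ∧ G.Separates S w t := by
  classical
  set A := {v | ∃ p : G.Walk a v, ∀ z ∈ p.support, z ∉ S}
  have haA : a ∈ A := ⟨.nil, by simpa using ha⟩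
  have hbA : b ∉ A := fun ⟨p, hp⟩ => by obtain ⟨s, hs, hsS⟩ := hab p; exact hp s hs hsS
  refine ⟨fun v => if v = b then 0 else if v ∈ A then 1 else 2, fun w hwS hwb => ?_⟩
  by_cases hwA : w ∈ A
  · refine ⟨b, hb, by simp [hwb, hwA], fun q => ?_⟩
    obtain ⟨p, hp⟩ := hwA
    by_contra! hq
    exact hbA ⟨p.append q, fun z hz =>
      ((Walk.mem_support_append_iff p q).mp hz).elim (hp z) (hq z)⟩
  · have hne : a ≠ b := by rintro rfl; exact hbA haA
    refine ⟨a, ha, by simp [hwb, hwA, haA, hne], fun q => ?_⟩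
    by_contra! hq
    exact hwA ⟨q.reverse, by simpa using hq⟩

end Separation

theorem card_image_add_card_compl_le [Fintype V] [DecidableEq V] [DecidableRel G.Adj]
    [DecidableEq α] (hmc : ∀ u v, ∃ k, (G.colorGraph c k).Reachable u v)
    (hconn : ∀ k, ∀ x ∈ (G.colorGraph c k).support, ∀ y ∈ (G.colorGraph c k).support,
      (G.colorGraph c k).Reachable x y)
    {S : Finset V} {a b : V} (hab : G.Separates S a b) (ha : a ∉ S) (hb : b ∉ S) :
    #(G.edgeFinset.image c) + #Sᶜ ≤ #G.edgeFinset + 1 := by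
  obtain ⟨D, hD⟩ := hab.exists_potential ha hb
  set K := G.edgeFinset.image c
  have hcharge : ∀ w ∈ Sᶜ.erase b, ∃ k ∈ K, w ∉ S ∧
      (∃ p ∉ S, D p < D w ∧ (G.colorGraph c k).Reachable w p) ∧
      ∃ s ∈ S, (G.colorGraph c k).Reachable w s := by
    intro w hw
    obtain ⟨hwb, hwS⟩ : w ≠ b ∧ w ∉ S := by simpa using hw
    obtain ⟨t, htS, htw, hsep⟩ := hD w hwS hwb
    obtain ⟨k, ⟨q⟩⟩ := hmc w t
    obtain ⟨s, hsq, hsS⟩ := hsep (q.mapLe colorGraph_le)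
    rw [Walk.support_mapLe_eq_support] at hsq
    obtain ⟨y, hy⟩ := mem_support_of_reachable (by rintro rfl; omega) ⟨q⟩
    refine ⟨k, ?_, hwS, ⟨t, htS, htw, ⟨q⟩⟩, s, hsS, ⟨q.takeUntil s hsq⟩⟩
    obtain ⟨hwy, hk⟩ := colorGraph_adj.mp hy
    exact mem_image.mpr ⟨s(w, y), by simpa using hwy, hk⟩
  have : Nonempty α := (hmc a a).nonempty
  choose! κ hκK hκ using hcharge
  have hclass :
      ∀ k ∈ K, #{w ∈ Sᶜ.erase b | κ w = k} + 1 ≤ #{e ∈ G.edgeFinset | c e = k} := by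
    intro k hk
    rw [← edgeFinset_colorGraph]
    refine card_add_one_le_card_edgeFinset_of_reachable (hconn k) (S := S) (D := D) ?_
      fun w hw => ?_
    · obtain ⟨e, he, rfl⟩ := mem_image.mp hk
      exact ⟨e, by simpa using he⟩
    · obtain ⟨hw', rfl⟩ := mem_filter.mp hw
      exact hκ w hw'
  calc #K + #Sᶜ ≤ #K + (#(Sᶜ.erase b) + 1) := by
        have := pred_card_le_card_erase (s := Sᶜ) (a := b); omega
    _ = ∑ k ∈ K, (#{w ∈ Sᶜ.erase b | κ w = k} + 1) + 1 := by
      rw [sum_add_distrib, ← card_eq_sum_card_fiberwise hκK, card_eq_sum_ones K]; ring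
    _ ≤ ∑ k ∈ K, #{e ∈ G.edgeFinset | c e = k} + 1 := by gcongr with k hk; exact hclass k hk
    _ = #G.edgeFinset + 1 := by rw [← card_eq_sum_card_image]

end SimpleGraph

theorem IsMCColoring.exists_reachable_colorGraph {V : Type*} {G : SimpleGraph V}
    {c : Sym2 V → ℕ} (hc : IsMCColoring G c) (u v : V) :
    ∃ k, (G.colorGraph c k).Reachable u v :=
  let ⟨p, _, k, hk⟩ := hc u v
  ⟨k, ⟨p.transfer _ fun e he =>
    mem_edgeSet_colorGraph.mpr ⟨p.edges_subset_edgeSet he, hk e he⟩⟩⟩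

theorem IsMCColoring.card_image_add_card_compl_le {V : Type*} [Fintype V] [DecidableEq V]
    {G : SimpleGraph V} [DecidableRel G.Adj] {c : Sym2 V → ℕ} (hc : IsMCColoring G c)
    {S : Finset V} {a b : V} (hab : G.Separates S a b) (ha : a ∉ S) (hb : b ∉ S) :
    #(G.edgeFinset.image c) + #Sᶜ ≤ #G.edgeFinset + 1 := by
  classical
  have hfst : G.edgeFinset.image c =
      (G.edgeFinset.image (G.componentColoring c)).image (Prod.fst : ℕ × Set V → ℕ) := by
    rw [image_image]; rfl
  have := G.card_image_add_card_compl_le (c := G.componentColoring c)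
    (fun u v => let ⟨_, h⟩ := hc.exists_reachable_colorGraph u v;
      ⟨_, reachable_colorGraph_componentColoring h⟩)
    (fun _ _ hx _ hy => reachable_of_mem_support_colorGraph_componentColoring hx hy) hab ha hb
  rw [hfst]
  exact (Nat.add_le_add_right (card_image_le (f := Prod.fst)) _).trans this

theorem mcNum_le {V : Type*} [Fintype V] [DecidableEq V] {G : SimpleGraph V} [DecidableRel G.Adj]
    {B : ℕ} (h : ∀ c, IsMCColoring G c → #(G.edgeFinset.image c) ≤ B) : mcNum G ≤ B := by
  refine csSup_le' ?_
  rintro _ ⟨c, hc, rfl⟩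
  rw [← coe_edgeFinset, ← coe_image, Set.ncard_coe_finset]
  exact h c hc

theorem mc_le_of_not_r_connected_general {V : Type*} [Fintype V] [DecidableEq V]
    (G : SimpleGraph V) [DecidableRel G.Adj] (hG : G.Connected)
    (r : ℕ) (hnc : ¬ IsKConnected G r) :
    (mcNum G : ℤ) ≤ (G.edgeFinset.card : ℤ) - (Fintype.card V : ℤ) + (r : ℤ) := by
  by_cases hr : Fintype.card V ≤ r
  · have hmc : mcNum G ≤ #G.edgeFinset := mcNum_le fun c _ => card_image_le
    omega
  obtain ⟨S, hSr, hS⟩ :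
      ∃ S : Finset V, #S < r ∧ ¬ (G.induce (S : Set V)ᶜ).Connected := by
    simpa [IsKConnected, not_le.mp hr] using hnc
  have hSc : #Sᶜ = Fintype.card V - #S := card_compl S
  obtain ⟨v, hv⟩ : Sᶜ.Nonempty := card_pos.mp (by omega)
  obtain ⟨a, b, ha, hb, hab⟩ :=
    G.exists_separates_of_not_connected_induce ⟨v, by simpa using hv⟩ hS
  have hmc : mcNum G ≤ #G.edgeFinset + 1 - #Sᶜ := mcNum_le fun c hc => by
    have := hc.card_image_add_card_compl_le hab ha hb
    omega
  have hn : Fintype.card V ≤ #G.edgeFinset + 1 := by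
    simpa [Nat.card_eq_fintype_card, edgeFinset_card] using hG.card_vert_le_card_edgeSet_add_one
  omega

/-- If a connected graph `G` is not `r`-connected (`r` a positive integer),
then `mc(G) ≤ m - n + r`. -/
theorem mc_le_of_not_r_connected {V : Type*} [Fintype V] [DecidableEq V]
    (G : SimpleGraph V) [DecidableRel G.Adj] (hG : G.Connected)
    (r : ℕ) (hr : 0 < r) (hnc : ¬ IsKConnected G r) :
    (mcNum G : ℤ) ≤ (G.edgeFinset.card : ℤ) - (Fintype.card V : ℤ) + (r : ℤ) :=
  mc_le_of_not_r_connected_general G hG r hnc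
end
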